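/- Let l(σ, p) = -1/(2σ²) - log σ + Σ_{i=1}^J π_i log p_i - log(Σ_{i=1}^J T_i(σ) p_i), where π_i = 1/J and T_i(σ) = Φ(c_i/σ) - Φ(c_{i-1}/σ) with c_i the i/J-quantiles of the standard normal. Then at σ = 1, p_i = 1 for all i: (a) ∂²l/∂σ² = -2; (b) ∂²l/∂σ∂p_i = -(1/√(2π))(c_{i-1} e^{-c_{i-1}²/2} - c_i e^{-c_i²/2}); (c) ∂²l/∂p_i∂p_j = 1/J² for i ≠ j; (d) ∂²l/∂p_i² = 1/J² - 1/J. -/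

import Mathlib

/-- The standard normal CDF. -/
noncomputable def stdNormCDF' (x : ℝ) : ℝ :=
  ∫ t in Set.Iic x, (Real.sqrt (2 * Real.pi))⁻¹ * Real.exp (-t ^ 2 / 2)

/-!
Telescoping gives `∑ i, T i σ = 1` for every `σ`, so along `p ≡ 1` the log-sum vanishes and
`l(σ, 1) = -1/(2σ²) - log σ`, whose second derivative at `1` is `-2`. In the `p`-directions,
`∂l/∂p_j = π_j / p_j - T_j / ∑ T_k p_k`; at `p ≡ 1` this is `π_i - T_i(σ)`, so the mixed partial
is `-T_i'(1)`, computed from `Φ' = φ` and `d/dσ (c/σ) = -c` at `σ = 1`. Differentiating once more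
in `p` gives the Hessian `T Tᵀ - diag π` at `p ≡ 1`, and `T_i(1) = π_i = 1/J` yields (c) and (d).
-/

open Function Real MeasureTheory Filter Topology

theorem hasDerivAt_integral_Iic {E : Type*} [NormedAddCommGroup E] [NormedSpace ℝ E]
    [CompleteSpace E] {f : ℝ → E} (hf : Integrable f) {x : ℝ} (hfx : ContinuousAt f x) :
    HasDerivAt (fun y => ∫ t in Set.Iic y, f t) (f x) x := by
  have hsplit : (fun y => ∫ t in Set.Iic y, f t)
      = fun y => (∫ t in Set.Iic 0, f t) + ∫ t in (0 : ℝ)..y, f t := by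
    funext y
    rw [← intervalIntegral.integral_Iic_sub_Iic hf.integrableOn hf.integrableOn, add_sub_cancel]
  rw [hsplit]
  exact (intervalIntegral.integral_hasDerivAt_right hf.intervalIntegrable
    hf.aestronglyMeasurable.stronglyMeasurableAtFilter hfx).const_add _

theorem hasDerivAt_stdNormCDF' (x : ℝ) :
    HasDerivAt stdNormCDF' ((√(2 * π))⁻¹ * exp (-x ^ 2 / 2)) x := by
  have hint : Integrable fun t : ℝ => (√(2 * π))⁻¹ * exp (-t ^ 2 / 2) := by
    simpa [neg_div, div_eq_inv_mul, mul_comm] using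
      (integrable_exp_neg_mul_sq (b := 1 / 2) (by norm_num)).const_mul (√(2 * π))⁻¹
  exact hasDerivAt_integral_Iic hint (by fun_prop)

theorem hasDerivAt_stdNormCDF'_div (x : ℝ) {σ : ℝ} (hσ : σ ≠ 0) :
    HasDerivAt (fun σ => stdNormCDF' (x / σ))
      (-(√(2 * π))⁻¹ * (x / σ ^ 2 * exp (-(x / σ) ^ 2 / 2))) σ := by
  have h := (hasDerivAt_stdNormCDF' (x / σ)).comp σ ((hasDerivAt_inv hσ).const_mul x)
  simp only [comp_def] at h
  refine h.congr_deriv ?_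
  ring

theorem deriv_deriv_neg_one_div_two_mul_sq_sub_log :
    deriv (deriv fun σ : ℝ => -(1 / (2 * σ ^ 2)) - log σ) 1 = -2 := by
  have hderiv : ∀ σ : ℝ, σ ≠ 0 →
      HasDerivAt (fun σ : ℝ => -(1 / (2 * σ ^ 2)) - log σ) (σ ^ (-3 : ℤ) - σ⁻¹) σ := by
    intro σ hσ
    have hfun : (fun σ : ℝ => -(1 / (2 * σ ^ 2)) - log σ)
        = fun σ => -(1 / 2) * σ ^ (-2 : ℤ) - log σ := by
      funext τ; simp only [zpow_neg, zpow_two]; ring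
    rw [hfun]
    refine (((hasDerivAt_zpow (-2) σ (.inl hσ)).const_mul (-(1 / 2))).fun_sub
      (hasDerivAt_log hσ)).congr_deriv ?_
    norm_num
    ring
  have hfirst : deriv (fun σ : ℝ => -(1 / (2 * σ ^ 2)) - log σ) =ᶠ[𝓝 1]
      fun σ => σ ^ (-3 : ℤ) - σ⁻¹ := by
    filter_upwards [eventually_ne_nhds one_ne_zero] with σ hσ using (hderiv σ hσ).deriv
  rw [hfirst.deriv_eq]
  have h := (hasDerivAt_zpow (-3) (1 : ℝ) (.inl one_ne_zero)).fun_sub (hasDerivAt_inv one_ne_zero)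
  rw [h.deriv]
  norm_num

theorem Fin.sum_univ_val_succ_sub {M : Type*} [AddCommGroup M] (f : ℕ → M) (n : ℕ) :
    ∑ i : Fin n, (f (i + 1) - f i) = f n - f 0 := by
  rw [Fin.sum_univ_eq_sum_range (fun i => f (i + 1) - f i), Finset.sum_range_sub]

section
variable {ι : Type*} [Fintype ι] [DecidableEq ι]

theorem hasDerivAt_sum_mul_update (w p : ι → ℝ) (j : ι) (u : ℝ) :
    HasDerivAt (fun u => ∑ k, w k * update p j u k) (w j) u := by
  have h := HasDerivAt.fun_sum (u := Finset.univ) fun k _ =>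
    ((hasDerivAt_pi.1 (hasDerivAt_update p j u)) k).const_mul (w k)
  simpa [Pi.single_apply] using h

theorem hasDerivAt_sum_mul_log_update (w p : ι → ℝ) (j : ι) {u : ℝ}
    (hp : ∀ k ≠ j, p k ≠ 0) (hu : u ≠ 0) :
    HasDerivAt (fun u => ∑ k, w k * log (update p j u k)) (w j / u) u := by
  have hne : ∀ k, update p j u k ≠ 0 := fun k => by
    rcases eq_or_ne k j with rfl | hk
    · simpa using hu
    · simpa [hk] using hp k hk
  have h := HasDerivAt.fun_sum (u := Finset.univ) fun k _ =>
    (((hasDerivAt_pi.1 (hasDerivAt_update p j u)) k).log (hne k)).const_mul (w k)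
  simpa [Pi.single_apply, div_eq_mul_inv] using h

end

section
variable {ι : Type*} [Fintype ι]

noncomputable def logLik (w : ι → ℝ) (T : ι → ℝ → ℝ) (σ : ℝ) (p : ι → ℝ) : ℝ :=
  -(1 / (2 * σ ^ 2)) - log σ + ∑ i, w i * log (p i) - log (∑ i, T i σ * p i)

variable (w : ι → ℝ) {T : ι → ℝ → ℝ} {σ : ℝ}

theorem logLik_one (hσ : ∑ k, T k σ = 1) : logLik w T σ 1 = -(1 / (2 * σ ^ 2)) - log σ := by
  simp [logLik, hσ]

theorem deriv_deriv_logLik_one (hT : ∀ σ, ∑ k, T k σ = 1) :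
    deriv (deriv fun σ => logLik w T σ 1) 1 = -2 := by
  rw [funext fun σ => logLik_one w (hT σ)]
  exact deriv_deriv_neg_one_div_two_mul_sq_sub_log

variable [DecidableEq ι]

theorem hasDerivAt_logLik_update {σ : ℝ} {p : ι → ℝ} {j : ι} {u : ℝ}
    (hp : ∀ k ≠ j, p k ≠ 0) (hu : u ≠ 0) (hD : ∑ k, T k σ * update p j u k ≠ 0) :
    HasDerivAt (fun u => logLik w T σ (update p j u))
      (w j / u - T j σ / ∑ k, T k σ * update p j u k) u :=
  ((hasDerivAt_sum_mul_log_update w p j hp hu).const_add _).sub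
    ((hasDerivAt_sum_mul_update _ p j u).log hD)

theorem deriv_logLik_update_one (hσ : ∑ k, T k σ = 1) (i : ι) :
    deriv (fun s => logLik w T σ (update 1 i s)) 1 = w i - T i σ := by
  have h := hasDerivAt_logLik_update w (T := T) (σ := σ) (p := 1) (j := i) (by simp) one_ne_zero
    (by simp [hσ])
  simpa [hσ] using h.deriv

theorem eventually_ne_zero_sum_mul_update_one (hσ : ∑ k, T k σ = 1) (i : ι) :
    ∀ᶠ s in 𝓝 1, s ≠ 0 ∧ ∑ k, T k σ * update (1 : ι → ℝ) i s k ≠ 0 := by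
  have hD := (hasDerivAt_sum_mul_update (T · σ) 1 i 1).continuousAt.eventually_ne
    (by simp [hσ] : ∑ k, T k σ * update (1 : ι → ℝ) i 1 k ≠ 0)
  exact (eventually_ne_nhds one_ne_zero).and hD

theorem hasDerivAt_div_sum_mul_update_one (hσ : ∑ k, T k σ = 1) (i : ι) (a : ℝ) :
    HasDerivAt (fun s => a / ∑ k, T k σ * update (1 : ι → ℝ) i s k) (-(a * T i σ)) 1 := by
  have h := (hasDerivAt_const (1 : ℝ) a).fun_div (hasDerivAt_sum_mul_update (T · σ) 1 i 1)
    (by simp [hσ])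
  simpa [hσ] using h

theorem deriv_deriv_logLik_update (hσ : ∑ k, T k σ = 1) (i : ι) :
    deriv (deriv fun s => logLik w T σ (update 1 i s)) 1 = T i σ ^ 2 - w i := by
  have hfirst : deriv (fun s => logLik w T σ (update 1 i s))
      =ᶠ[𝓝 1] fun s => w i / s - T i σ / ∑ k, T k σ * update (1 : ι → ℝ) i s k := by
    filter_upwards [eventually_ne_zero_sum_mul_update_one hσ i] with s ⟨hs, hD⟩
    exact (hasDerivAt_logLik_update w (by simp) hs hD).deriv
  have h := ((hasDerivAt_const (1 : ℝ) (w i)).fun_div (hasDerivAt_id' 1) one_ne_zero).fun_sub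
    (hasDerivAt_div_sum_mul_update_one hσ i (T i σ))
  rw [hfirst.deriv_eq, h.deriv]
  ring

theorem deriv_deriv_logLik_update_update (hσ : ∑ k, T k σ = 1) {i j : ι} (hij : i ≠ j) :
    deriv (fun s => deriv (fun u => logLik w T σ (update (update 1 i s) j u)) 1) 1
      = T i σ * T j σ := by
  have hfirst : (fun s => deriv (fun u => logLik w T σ (update (update 1 i s) j u)) 1)
      =ᶠ[𝓝 1] fun s => w j - T j σ / ∑ k, T k σ * update (1 : ι → ℝ) i s k := by
    filter_upwards [eventually_ne_zero_sum_mul_update_one hσ i] with s ⟨hs, hD⟩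
    have hupd : update (update (1 : ι → ℝ) i s) j 1 = update (1 : ι → ℝ) i s := by
      simp [hij.symm]
    have hp : ∀ k ≠ j, update (1 : ι → ℝ) i s k ≠ 0 := fun k _ => by
      rcases eq_or_ne k i with rfl | hk <;> simp [*]
    simpa [hupd] using (hasDerivAt_logLik_update w hp one_ne_zero (by rwa [hupd])).deriv
  rw [hfirst.deriv_eq, ((hasDerivAt_div_sum_mul_update_one hσ i (T j σ)).const_sub (w j)).deriv]
  ring

theorem deriv_deriv_logLik_sigma_update (hT : ∀ σ, ∑ k, T k σ = 1) {i : ι} {T' : ℝ}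
    (hT' : HasDerivAt (T i) T' 1) :
    deriv (fun σ => deriv (fun s => logLik w T σ (update 1 i s)) 1) 1 = -T' := by
  rw [funext fun σ => deriv_logLik_update_one w (hT σ) i]
  simpa using (hT'.const_sub (w i)).deriv

end

theorem hasDerivAt_cutpointCDF_one {J : ℕ} {c : ℕ → ℝ} {G : ℕ → ℝ → ℝ}
    (hG : ∀ i σ, G i σ = if i = 0 then 0 else if i = J then 1 else stdNormCDF' (c i / σ))
    {e : ℕ → ℝ}
    (he : ∀ i, e i = if 1 ≤ i ∧ i ≤ J - 1 then c i * exp (-(c i) ^ 2 / 2) else 0)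
    {m : ℕ} (hm : m ≤ J) :
    HasDerivAt (G m) (-(√(2 * π))⁻¹ * e m) 1 := by
  rw [funext (hG m), he]
  by_cases hm0 : m = 0
  · simpa [hm0] using hasDerivAt_const (1 : ℝ) (0 : ℝ)
  by_cases hmJ : m = J
  · simpa [hmJ, show J ≠ 0 by omega, show ¬J ≤ J - 1 by omega] using
      hasDerivAt_const (1 : ℝ) (1 : ℝ)
  simpa [hm0, hmJ, show 1 ≤ m ∧ m ≤ J - 1 by omega] using
    hasDerivAt_stdNormCDF'_div (c m) one_ne_zero

/-- For
`l(σ,p) = -1/(2σ²) - log σ + Σ_i (1/J) log p_i - log(Σ_i T_i(σ) p_i)`, where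
`T_i(σ) = Φ(c_i/σ) - Φ(c_{i-1}/σ)` and the `c_i` are the `i/J` standard normal
quantiles, at `σ = 1`, `p ≡ 1`:
(a) `∂²l/∂σ² = -2`;
(b) `∂²l/∂σ∂p_i = -(1/√(2π))(c_{i-1} e^{-c_{i-1}²/2} - c_i e^{-c_i²/2})`
    (boundary terms `0`);
(c) `∂²l/∂p_i∂p_j = 1/J²` for `i ≠ j`;
(d) `∂²l/∂p_i² = 1/J² - 1/J`. -/
theorem stmt13 (J : ℕ) (hJ : 2 ≤ J) (c : ℕ → ℝ)
    (hquant : ∀ i, 1 ≤ i → i ≤ J - 1 → stdNormCDF' (c i) = (i : ℝ) / J)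
    (G : ℕ → ℝ → ℝ)
    (hG : ∀ i σ, G i σ = if i = 0 then 0 else if i = J then 1 else stdNormCDF' (c i / σ))
    (T : Fin J → ℝ → ℝ) (hT : ∀ i σ, T i σ = G (i.1 + 1) σ - G i.1 σ)
    (e : ℕ → ℝ)
    (he : ∀ i, e i = if 1 ≤ i ∧ i ≤ J - 1 then c i * Real.exp (-(c i) ^ 2 / 2) else 0)
    (l : ℝ → (Fin J → ℝ) → ℝ)
    (hl : ∀ σ p, l σ p = -(1 / (2 * σ ^ 2)) - Real.log σ
        + ∑ i, (1 / (J : ℝ)) * Real.log (p i)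
        - Real.log (∑ i, T i σ * p i)) :
    (deriv (deriv (fun σ => l σ (fun _ => 1))) 1 = -2) ∧
    (∀ i : Fin J,
      deriv (fun σ => deriv (fun s => l σ (Function.update (fun _ => (1 : ℝ)) i s)) 1) 1
        = -(Real.sqrt (2 * Real.pi))⁻¹ * (e i.1 - e (i.1 + 1))) ∧
    (∀ i j : Fin J, i ≠ j →
      deriv (fun s =>
          deriv (fun u =>
            l 1 (Function.update (Function.update (fun _ => (1 : ℝ)) i s) j u)) 1) 1
        = 1 / (J : ℝ) ^ 2) ∧
    (∀ i : Fin J,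
      deriv (deriv (fun s => l 1 (Function.update (fun _ => (1 : ℝ)) i s))) 1
        = 1 / (J : ℝ) ^ 2 - 1 / J) := by
  obtain rfl : l = logLik (fun _ => 1 / (J : ℝ)) T := funext₂ hl
  have hGJ : ∀ σ, G J σ = 1 := fun σ => by simp [hG, show J ≠ 0 by omega]
  have hTsum : ∀ σ, ∑ k, T k σ = 1 := fun σ => by
    simp only [hT]
    rw [Fin.sum_univ_val_succ_sub (G · σ), hGJ, hG 0, if_pos rfl, sub_zero]
  have hG1 : ∀ m ≤ J, G m 1 = m / J := fun m hm => by
    rw [hG]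
    split_ifs with hm0 hmJ
    · simp [hm0]
    · simp [hmJ, show J ≠ 0 by omega]
    · rw [div_one, hquant m (by omega) (by omega)]
  have hT1 : ∀ k, T k 1 = 1 / J := fun k => by
    rw [hT, hG1 _ k.2, hG1 _ k.2.le]
    push_cast
    ring
  simp only [← Pi.one_def]
  refine ⟨deriv_deriv_logLik_one _ hTsum, fun i => ?_, fun i j hij => ?_, fun i => ?_⟩
  · have hTi : HasDerivAt (T i) ((√(2 * π))⁻¹ * (e i - e (i + 1))) 1 := by
      rw [funext (hT i)]
      refine ((hasDerivAt_cutpointCDF_one hG he (m := i + 1) i.2).sub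
        (hasDerivAt_cutpointCDF_one hG he i.2.le)).congr_deriv ?_
      ring
    rw [deriv_deriv_logLik_sigma_update _ hTsum hTi]
    ring
  · rw [deriv_deriv_logLik_update_update _ (hTsum 1) hij, hT1, hT1]
    ring
  · rw [deriv_deriv_logLik_update _ (hTsum 1), hT1]
    ring
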